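/- arXiv:1906.02225 — 5 statements merged into one kernel-verified Lean document; each statement's English description precedes it below -/
import Mathlib

section
/- Let N ≥ 1 and let p be a real number with 1 < p ≤ 2. Then there exists a constant d₃ > 0 such that for all vectors ξ, η ∈ ℝ^N with (ξ, η) ≠ (0, 0) one has (|ξ|^{p-2}ξ − |η|^{p-2}η)·(ξ − η) ≥ d₃ |ξ − η|² / (|ξ| + |η|)^{2-p}. -/
/-!
Write `a = ‖ξ‖`, `b = ‖η‖`, `t = ⟪ξ, η⟫` and `q = p - 1 ∈ (0, 1]`. Both sides of the inequality,
with `d₃ = q`, are affine in `t`, and Cauchy–Schwarz confines `t` to `[-ab, ab]`, so it suffices to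
check the two endpoints. At `t = ab` it reads `q (a - b)² (a + b)^(q-1) ≤ (a^q - b^q)(a - b)`, which
follows from the tangent-line bound of the concave map `x ↦ x^q`; at `t = -ab` it reads
`q (a + b)^(q+1) ≤ (a^q + b^q)(a + b)`, which follows from subadditivity of `x ↦ x^q`.
-/

open Real

lemma Real.rpow_sub_one_mul_self {a q : ℝ} (ha : 0 ≤ a) (hq : q ≠ 0) :
    a ^ (q - 1) * a = a ^ q := by
  rw [← rpow_add_one' ha (by simpa using hq), sub_add_cancel]

lemma Real.mul_rpow_sub_one_mul_sub_le_rpow_sub_rpow {q a b : ℝ} (hq₀ : 0 ≤ q) (hq₁ : q ≤ 1)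
    (ha : 0 < a) (hb : 0 ≤ b) : q * a ^ (q - 1) * (a - b) ≤ a ^ q - b ^ q := by
  have bernoulli := rpow_one_add_le_one_add_mul_self (s := b / a - 1)
    (by linarith [div_nonneg hb ha.le]) hq₀ hq₁
  rw [add_sub_cancel, div_rpow hb ha.le, div_le_iff₀ (rpow_pos_of_pos ha q)] at bernoulli
  calc q * a ^ (q - 1) * (a - b) = a ^ q - (1 + q * (b / a - 1)) * a ^ q := by
        rw [rpow_sub_one ha.ne']; field_simp; ring
    _ ≤ a ^ q - b ^ q := by linarith

lemma Real.mul_sq_sub_mul_rpow_sub_one_le {q a b : ℝ} (hq₀ : 0 ≤ q) (hq₁ : q ≤ 1)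
    (ha : 0 ≤ a) (hb : 0 ≤ b) (hab : 0 < a + b) :
    q * (a - b) ^ 2 * (a + b) ^ (q - 1) ≤ (a ^ q - b ^ q) * (a - b) := by
  wlog hba : b ≤ a generalizing a b
  · have := this hb ha (by linarith) (by linarith)
    rw [add_comm] at this
    linarith
  have ha₀ : 0 < a := by linarith
  have hmono : (a + b) ^ (q - 1) ≤ a ^ (q - 1) :=
    rpow_le_rpow_of_nonpos ha₀ (by linarith) (by linarith)
  calc q * (a - b) ^ 2 * (a + b) ^ (q - 1) = q * (a + b) ^ (q - 1) * (a - b) * (a - b) := by ring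
    _ ≤ q * a ^ (q - 1) * (a - b) * (a - b) := by gcongr
    _ ≤ (a ^ q - b ^ q) * (a - b) :=
      mul_le_mul_of_nonneg_right (mul_rpow_sub_one_mul_sub_le_rpow_sub_rpow hq₀ hq₁ ha₀ hb)
        (by linarith)

lemma Real.mul_sq_add_mul_rpow_sub_one_le {q a b : ℝ} (hq₀ : 0 < q) (hq₁ : q ≤ 1)
    (ha : 0 ≤ a) (hb : 0 ≤ b) :
    q * (a + b) ^ 2 * (a + b) ^ (q - 1) ≤ (a ^ q + b ^ q) * (a + b) := by
  have hab : 0 ≤ a + b := add_nonneg ha hb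
  calc q * (a + b) ^ 2 * (a + b) ^ (q - 1) = q * (a + b) ^ q * (a + b) := by
        rw [← rpow_sub_one_mul_self hab hq₀.ne']; ring
    _ ≤ (a + b) ^ q * (a + b) := by
      gcongr
      nlinarith [rpow_nonneg hab q]
    _ ≤ (a ^ q + b ^ q) * (a + b) := by
      gcongr
      exact rpow_add_le_add_rpow ha hb hq₀.le hq₁

lemma add_mul_nonneg_of_abs_le {α β m t : ℝ} (ht : |t| ≤ m) (h_neg : 0 ≤ α - β * m)
    (h_pos : 0 ≤ α + β * m) : 0 ≤ α + β * t := by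
  obtain ⟨ht_neg, ht_pos⟩ := abs_le.mp ht
  rcases le_total 0 β with hβ | hβ <;> nlinarith

lemma Real.mul_sq_sub_mul_rpow_sub_one_le_of_abs_le {q a b t : ℝ} (hq₀ : 0 < q) (hq₁ : q ≤ 1)
    (ha : 0 ≤ a) (hb : 0 ≤ b) (hab : 0 < a + b) (ht : |t| ≤ a * b) :
    q * (a ^ 2 - 2 * t + b ^ 2) * (a + b) ^ (q - 1) ≤
      a ^ (q - 1) * (a ^ 2 - t) + b ^ (q - 1) * (b ^ 2 - t) := by
  have ea := rpow_sub_one_mul_self ha hq₀.ne'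
  have eb := rpow_sub_one_mul_self hb hq₀.ne'
  have hsub := mul_sq_sub_mul_rpow_sub_one_le hq₀.le hq₁ ha hb hab
  have hadd := mul_sq_add_mul_rpow_sub_one_le hq₀ hq₁ ha hb
  have := add_mul_nonneg_of_abs_le ht
    (α := a ^ (q - 1) * a ^ 2 + b ^ (q - 1) * b ^ 2 - q * (a ^ 2 + b ^ 2) * (a + b) ^ (q - 1))
    (β := 2 * q * (a + b) ^ (q - 1) - a ^ (q - 1) - b ^ (q - 1))
    (by nlinarith) (by nlinarith)
  linarith

lemma inner_smul_sub_smul_sub {E : Type*} [NormedAddCommGroup E] [InnerProductSpace ℝ E]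
    (r s : ℝ) (ξ η : E) :
    inner ℝ (r • ξ - s • η) (ξ - η) =
      r * (‖ξ‖ ^ 2 - inner ℝ ξ η) + s * (‖η‖ ^ 2 - inner ℝ ξ η) := by
  simp only [inner_sub_left, inner_sub_right, real_inner_smul_left, real_inner_self_eq_norm_sq,
    real_inner_comm ξ η]
  ring

theorem stmt_2_general (N : ℕ) (p : ℝ) (hp : 1 < p) (hp' : p ≤ 2) :
    ∃ d₃ : ℝ, 0 < d₃ ∧ ∀ ξ η : EuclideanSpace ℝ (Fin N), (ξ, η) ≠ (0, 0) →
      (inner ℝ ((‖ξ‖ ^ (p - 2)) • ξ - (‖η‖ ^ (p - 2)) • η) (ξ - η) : ℝ) ≥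
        d₃ * ‖ξ - η‖ ^ 2 / (‖ξ‖ + ‖η‖) ^ (2 - p) := by
  refine ⟨p - 1, by linarith, fun ξ η hne => ?_⟩
  have hab : 0 < ‖ξ‖ + ‖η‖ := by
    by_contra! h
    exact hne (by simp [norm_eq_zero.mp (by linarith [norm_nonneg ξ, norm_nonneg η] : ‖ξ‖ = 0),
      norm_eq_zero.mp (by linarith [norm_nonneg ξ, norm_nonneg η] : ‖η‖ = 0)])
  rw [inner_smul_sub_smul_sub, norm_sub_sq_real, div_eq_mul_inv, ← rpow_neg hab.le, neg_sub,
    show p - 2 = p - 1 - 1 by ring]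
  exact mul_sq_sub_mul_rpow_sub_one_le_of_abs_le (by linarith) (by linarith) (norm_nonneg ξ)
    (norm_nonneg η) hab (abs_real_inner_le_norm ξ η)

/-- Lemma 2.2(ii), first inequality: for `1 < p ≤ 2` there is `d₃ > 0` with
`(|ξ|^{p-2}ξ − |η|^{p-2}η) · (ξ − η) ≥ d₃ |ξ − η|² / (|ξ| + |η|)^{2-p}`
for all `(ξ, η) ≠ (0, 0)` in `ℝ^N × ℝ^N`. -/
theorem stmt_2 (N : ℕ) (hN : 1 ≤ N) (p : ℝ) (hp : 1 < p) (hp' : p ≤ 2) :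
    ∃ d₃ : ℝ, 0 < d₃ ∧ ∀ ξ η : EuclideanSpace ℝ (Fin N), (ξ, η) ≠ (0, 0) →
      (inner ℝ ((‖ξ‖ ^ (p - 2)) • ξ - (‖η‖ ^ (p - 2)) • η) (ξ - η) : ℝ) ≥
        d₃ * ‖ξ - η‖ ^ 2 / (‖ξ‖ + ‖η‖) ^ (2 - p) :=
  stmt_2_general N p hp hp'
end

section
/- Let N ≥ 1 and let p be a real number with 1 < p ≤ 2. Then there exists a constant d₄ > 0 such that for all vectors ξ, η ∈ ℝ^N one has | |ξ|^{p-2}ξ − |η|^{p-2}η | ≤ d₄ |ξ − η|^{p-1}. -/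
/-!
Write `r = p - 1 ∈ [0, 1]`, `t = ‖ξ‖ ≥ s = ‖η‖` and `D = ‖ξ - η‖`. If `t ≤ D`, both terms have
norm at most `D ^ r`. Otherwise split
`t^(r-1) ξ - s^(r-1) η = t^(r-1) (ξ - η) + (t^(r-1) - s^(r-1)) η`: the first term is at most
`D · D^(r-1) = D^r` because `t^(r-1)` decreases in `t`, and the second is at most
`s^r - s t^(r-1) ≤ t^r - s t^(r-1) = (t - s) t^(r-1) ≤ (t - s)^r ≤ D^r`.
-/

open Real

lemma mul_rpow_sub_one_le_rpow {a b r : ℝ} (ha : 0 ≤ a) (hab : a ≤ b) (hr : r ≤ 1) :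
    a * b ^ (r - 1) ≤ a ^ r := by
  rcases ha.eq_or_lt with rfl | ha
  · simpa using rpow_nonneg le_rfl r
  calc a * b ^ (r - 1) ≤ a * a ^ (r - 1) :=
        mul_le_mul_of_nonneg_left (rpow_le_rpow_of_nonpos ha hab (by linarith)) ha.le
    _ = a ^ r := by rw [rpow_sub_one ha.ne', mul_div_cancel₀ _ ha.ne']

lemma mul_abs_rpow_sub_one_sub_le {s t r : ℝ} (hs : 0 ≤ s) (hst : s ≤ t) (hr0 : 0 ≤ r)
    (hr1 : r ≤ 1) : s * |t ^ (r - 1) - s ^ (r - 1)| ≤ (t - s) ^ r := by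
  rcases hs.eq_or_lt with rfl | hs
  · simpa using rpow_nonneg hst r
  have hts : t ^ (r - 1) ≤ s ^ (r - 1) := rpow_le_rpow_of_nonpos hs hst (by linarith)
  have ht : 0 < t := hs.trans_le hst
  calc s * |t ^ (r - 1) - s ^ (r - 1)| = s * s ^ (r - 1) - s * t ^ (r - 1) := by
        rw [abs_of_nonpos (by linarith), mul_neg, mul_sub, neg_sub]
    _ = s ^ r - s * t ^ (r - 1) := by rw [rpow_sub_one hs.ne', mul_div_cancel₀ _ hs.ne']
    _ ≤ t * t ^ (r - 1) - s * t ^ (r - 1) := by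
        rw [rpow_sub_one ht.ne', mul_div_cancel₀ _ ht.ne']
        gcongr
    _ = (t - s) * t ^ (r - 1) := by ring
    _ ≤ (t - s) ^ r := mul_rpow_sub_one_le_rpow (by linarith) (by linarith) hr1

section NormedSpace

variable {E : Type*} [NormedAddCommGroup E] [NormedSpace ℝ E]

lemma norm_rpow_sub_one_smul_le (r : ℝ) (x : E) : ‖(‖x‖ ^ (r - 1)) • x‖ ≤ ‖x‖ ^ r := by
  rw [norm_smul, norm_of_nonneg (rpow_nonneg (norm_nonneg x) _)]
  rcases (norm_nonneg x).eq_or_lt with hx | hx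
  · simpa [← hx] using rpow_nonneg le_rfl r
  · rw [rpow_sub_one hx.ne', div_mul_cancel₀ _ hx.ne']

lemma norm_rpow_sub_one_smul_sub_le {r : ℝ} (hr0 : 0 ≤ r) (hr1 : r ≤ 1) (x y : E) :
    ‖(‖x‖ ^ (r - 1)) • x - (‖y‖ ^ (r - 1)) • y‖ ≤ 2 * ‖x - y‖ ^ r := by
  wlog hyx : ‖y‖ ≤ ‖x‖ generalizing x y
  · rw [norm_sub_rev, norm_sub_rev x]
    exact this y x (le_of_not_ge hyx)
  rcases le_total ‖x‖ ‖x - y‖ with hxD | hDx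
  · calc ‖(‖x‖ ^ (r - 1)) • x - (‖y‖ ^ (r - 1)) • y‖
          ≤ ‖(‖x‖ ^ (r - 1)) • x‖ + ‖(‖y‖ ^ (r - 1)) • y‖ := norm_sub_le _ _
      _ ≤ ‖x‖ ^ r + ‖y‖ ^ r := add_le_add (norm_rpow_sub_one_smul_le r x)
          (norm_rpow_sub_one_smul_le r y)
      _ ≤ ‖x - y‖ ^ r + ‖x - y‖ ^ r := by gcongr; exact hyx.trans hxD
      _ = 2 * ‖x - y‖ ^ r := by ring
  · have hsplit : (‖x‖ ^ (r - 1)) • x - (‖y‖ ^ (r - 1)) • y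
        = (‖x‖ ^ (r - 1)) • (x - y) + (‖x‖ ^ (r - 1) - ‖y‖ ^ (r - 1)) • y := by
      rw [smul_sub, sub_smul]; abel
    calc ‖(‖x‖ ^ (r - 1)) • x - (‖y‖ ^ (r - 1)) • y‖
          ≤ ‖(‖x‖ ^ (r - 1)) • (x - y)‖ + ‖(‖x‖ ^ (r - 1) - ‖y‖ ^ (r - 1)) • y‖ :=
            hsplit ▸ norm_add_le _ _
      _ = ‖x - y‖ * ‖x‖ ^ (r - 1) + ‖y‖ * |‖x‖ ^ (r - 1) - ‖y‖ ^ (r - 1)| := by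
        rw [norm_smul, norm_smul, norm_of_nonneg (rpow_nonneg (norm_nonneg x) _), norm_eq_abs,
          mul_comm, mul_comm |_|]
      _ ≤ ‖x - y‖ ^ r + (‖x‖ - ‖y‖) ^ r := add_le_add
          (mul_rpow_sub_one_le_rpow (norm_nonneg _) hDx hr1)
          (mul_abs_rpow_sub_one_sub_le (norm_nonneg y) hyx hr0 hr1)
      _ ≤ ‖x - y‖ ^ r + ‖x - y‖ ^ r := by
        gcongr
        exact norm_sub_norm_le x y
      _ = 2 * ‖x - y‖ ^ r := by ring

end NormedSpace

theorem stmt_3_general (N : ℕ) (p : ℝ) (hp : 1 < p) (hp' : p ≤ 2) :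
    ∃ d₄ : ℝ, 0 < d₄ ∧ ∀ ξ η : EuclideanSpace ℝ (Fin N),
      ‖(‖ξ‖ ^ (p - 2)) • ξ - (‖η‖ ^ (p - 2)) • η‖ ≤ d₄ * ‖ξ - η‖ ^ (p - 1) := by
  refine ⟨2, two_pos, fun ξ η => ?_⟩
  rw [show p - 2 = p - 1 - 1 by ring]
  exact norm_rpow_sub_one_smul_sub_le (by linarith) (by linarith) ξ η

/-- Lemma 2.2(ii), second inequality: for `1 < p ≤ 2` there is `d₄ > 0` with
`| |ξ|^{p-2}ξ − |η|^{p-2}η | ≤ d₄ |ξ − η|^{p-1}` for all `ξ, η ∈ ℝ^N`. -/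
theorem stmt_3 (N : ℕ) (hN : 1 ≤ N) (p : ℝ) (hp : 1 < p) (hp' : p ≤ 2) :
    ∃ d₄ : ℝ, 0 < d₄ ∧ ∀ ξ η : EuclideanSpace ℝ (Fin N),
      ‖(‖ξ‖ ^ (p - 2)) • ξ - (‖η‖ ^ (p - 2)) • η‖ ≤ d₄ * ‖ξ - η‖ ^ (p - 1) :=
  stmt_3_general N p hp hp'
end

section
/- Let p > 1 be a real number and let f : ℝ → ℝ be continuous with f(0) = 0 such that the map t ↦ f(t)/t^{p-1} is strictly increasing on (0, ∞). Define H(t) = f(t) t − p ∫₀^t f(s) ds. Then H is strictly increasing on (0, ∞) and H(t) ≥ 0 for all t ≥ 0. -/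
open intervalIntegral

/-!
Write `g t = f t / t ^ (p - 1)`, so that `f t * t = g t * t ^ p`. For `0 ≤ a ≤ b`, monotonicity
of `g` gives `f ≤ g b * s ^ (p - 1)` on `[a, b]`, hence `p * ∫ s in a..b, f s ≤ g b * (b ^ p - a ^ p)`
and therefore `H b - H a ≥ (g b - g a) * a ^ p`. This is positive for `0 < a < b`, and taking
`a = 0` gives `H b ≥ 0`.
-/

namespace Real

variable {p : ℝ} {f : ℝ → ℝ}

lemma div_rpow_sub_one_mul_rpow (hp : p ≠ 0) {t : ℝ} (ht : 0 ≤ t) (x : ℝ) :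
    x / t ^ (p - 1) * t ^ p = x * t := by
  rcases ht.eq_or_lt with rfl | ht
  · simp [zero_rpow hp]
  · rw [rpow_sub_one ht.ne', div_div_eq_mul_div, div_mul_cancel₀ _ (rpow_pos_of_pos ht p).ne']

lemma le_div_rpow_mul_rpow_of_monotoneOn (hp : p ≠ 1) (hf0 : f 0 = 0)
    (hmono : MonotoneOn (fun t => f t / t ^ (p - 1)) (Set.Ioi 0))
    {s b : ℝ} (hs : 0 ≤ s) (hsb : s ≤ b) (hb : 0 < b) :
    f s ≤ f b / b ^ (p - 1) * s ^ (p - 1) := by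
  rcases hs.eq_or_lt with rfl | hs
  · rw [hf0, zero_rpow (sub_ne_zero.2 hp), mul_zero]
  · have hle : f s / s ^ (p - 1) ≤ f b / b ^ (p - 1) := hmono hs hb hsb
    rwa [div_le_iff₀ (rpow_pos_of_pos hs _)] at hle

lemma mul_integral_le_of_monotoneOn (hp : 0 < p) (hp1 : p ≠ 1) (hf : Continuous f)
    (hf0 : f 0 = 0) (hmono : MonotoneOn (fun t => f t / t ^ (p - 1)) (Set.Ioi 0))
    {a b : ℝ} (ha : 0 ≤ a) (hab : a ≤ b) (hb : 0 < b) :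
    p * ∫ s in a..b, f s ≤ f b / b ^ (p - 1) * (b ^ p - a ^ p) := by
  set c := f b / b ^ (p - 1)
  have hp_gt : -1 < p - 1 := by linarith
  have hbound : ∫ s in a..b, f s ≤ ∫ s in a..b, c * s ^ (p - 1) :=
    integral_mono_on hab (hf.intervalIntegrable a b)
      ((intervalIntegrable_rpow' hp_gt).const_mul c)
      fun s hs => le_div_rpow_mul_rpow_of_monotoneOn hp1 hf0 hmono (ha.trans hs.1) hs.2 hb
  have hval : ∫ s in a..b, c * s ^ (p - 1) = c * ((b ^ p - a ^ p) / p) := by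
    rw [integral_const_mul, integral_rpow (Or.inl hp_gt), sub_add_cancel]
  calc p * ∫ s in a..b, f s ≤ p * (c * ((b ^ p - a ^ p) / p)) := by
        rw [← hval]; exact mul_le_mul_of_nonneg_left hbound hp.le
    _ = c * (b ^ p - a ^ p) := by field_simp

lemma div_rpow_sub_mul_rpow_le_of_monotoneOn (hp : 0 < p) (hp1 : p ≠ 1) (hf : Continuous f)
    (hf0 : f 0 = 0) (hmono : MonotoneOn (fun t => f t / t ^ (p - 1)) (Set.Ioi 0))
    ⦃a b : ℝ⦄ (ha : 0 ≤ a) (hab : a ≤ b) (hb : 0 < b) :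
    (f b / b ^ (p - 1) - f a / a ^ (p - 1)) * a ^ p ≤
      (f b * b - p * ∫ s in (0 : ℝ)..b, f s) - (f a * a - p * ∫ s in (0 : ℝ)..a, f s) := by
  have hsplit := integral_add_adjacent_intervals (μ := MeasureTheory.volume)
    (hf.intervalIntegrable 0 a) (hf.intervalIntegrable a b)
  have hint := mul_integral_le_of_monotoneOn hp hp1 hf hf0 hmono ha hab hb
  have hfa := div_rpow_sub_one_mul_rpow hp.ne' ha (f a)
  have hfb := div_rpow_sub_one_mul_rpow hp.ne' hb.le (f b)
  rw [← hsplit]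
  linear_combination hint - hfa + hfb

end Real

/-- For `p > 1` and `f : ℝ → ℝ` continuous with `f 0 = 0` such that
`t ↦ f(t)/t^{p-1}` is strictly increasing on `(0, ∞)`, the function
`H(t) = f(t) t − p ∫₀^t f(s) ds` is strictly increasing on `(0, ∞)` and
nonnegative on `[0, ∞)`. -/
theorem stmt_11 (p : ℝ) (hp : 1 < p) (f : ℝ → ℝ) (hf : Continuous f)
    (hf0 : f 0 = 0)
    (hmono : StrictMonoOn (fun t => f t / t ^ (p - 1)) (Set.Ioi (0 : ℝ))) :
    StrictMonoOn (fun t => f t * t - p * ∫ s in (0 : ℝ)..t, f s) (Set.Ioi (0 : ℝ)) ∧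
      ∀ t ≥ (0 : ℝ), 0 ≤ f t * t - p * ∫ s in (0 : ℝ)..t, f s := by
  have hp0 : 0 < p := by linarith
  have key := Real.div_rpow_sub_mul_rpow_le_of_monotoneOn hp0 hp.ne' hf hf0 hmono.monotoneOn
  refine ⟨fun a ha b hb hab => ?_, fun t ht => ?_⟩
  · have hgap : 0 < (f b / b ^ (p - 1) - f a / a ^ (p - 1)) * a ^ p :=
      mul_pos (sub_pos.2 (hmono ha hb hab)) (Real.rpow_pos_of_pos ha p)
    linarith [key (le_of_lt ha) hab.le hb]
  · rcases ht.eq_or_lt with rfl | ht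
    · simp
    · simpa [Real.zero_rpow hp0.ne', hf0] using key le_rfl ht.le ht
end

section
/- Let p > 1 be a real number. Then for all real numbers a, b, c, d one has (|a − b|^{p-2}(a − b) − |c − d|^{p-2}(c − d)) · ((a − c)⁺ − (b − d)⁺) ≥ 0, where x⁺ = max{x, 0} and |t|^{p-2} t is interpreted as 0 when t = 0. Moreover, the inequality is strict whenever (a − c)⁺ ≠ (b − d)⁺. -/
/-
The map `φ(t) = |t|^(p-2) t` is odd and agrees with `t^(p-1)` on `[0, ∞)`, so it is strictly
increasing for `p > 1`. Writing `u = a - c`, `v = b - d`, the two arguments of `φ` are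
`a - b = u - (b - c)` and `c - d = v - (b - c)`, so the first factor is `F u - F v` for the
strictly increasing `F = φ(· - (b - c))`, while the second is `G u - G v` for the monotone
`G = max · 0`. Whenever `G u ≠ G v`, monotonicity of `G` forces `u` and `v` into the same order,
hence both factors have the same nonzero sign.
-/

theorem StrictMono.sub_mul_sub_pos_of_monotone {α R : Type*} [LinearOrder α] [Ring R]
    [LinearOrder R] [IsStrictOrderedRing R] {f g : α → R} (hf : StrictMono f) (hg : Monotone g)
    {i j : α} (h : g i ≠ g j) : 0 < (f i - f j) * (g i - g j) := by
  rcases h.lt_or_gt with hlt | hlt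
  · exact mul_pos_of_neg_of_neg (sub_neg.2 (hf (hg.reflect_lt hlt))) (sub_neg.2 hlt)
  · exact mul_pos (sub_pos.2 (hf (hg.reflect_lt hlt))) (sub_pos.2 hlt)

namespace Real

theorem abs_rpow_sub_two_mul_self_of_nonneg {p t : ℝ} (hp : p ≠ 1) (ht : 0 ≤ t) :
    |t| ^ (p - 2) * t = t ^ (p - 1) := by
  rcases ht.eq_or_lt with rfl | ht
  · rw [mul_zero, zero_rpow (sub_ne_zero.2 hp)]
  · rw [abs_of_pos ht, ← rpow_add_one ht.ne']
    ring_nf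

theorem strictMono_abs_rpow_sub_two_mul_self {p : ℝ} (hp : 1 < p) :
    StrictMono fun t : ℝ ↦ |t| ^ (p - 2) * t := by
  refine strictMono_of_odd_strictMonoOn_nonneg (fun t ↦ by rw [abs_neg, mul_neg]) ?_
  refine (strictMonoOn_rpow_Ici_of_exponent_pos (sub_pos.2 hp)).congr fun t ht ↦ ?_
  exact (abs_rpow_sub_two_mul_self_of_nonneg hp.ne' ht).symm

end Real

/-- The pointwise monotonicity inequality for the kernel of the fractional
`p`-Laplacian (key step in the weak comparison principle, Lemma 2.3):
`(|a − b|^{p-2}(a − b) − |c − d|^{p-2}(c − d)) ((a − c)⁺ − (b − d)⁺) ≥ 0`,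
with strict inequality whenever `(a − c)⁺ ≠ (b − d)⁺`.  Here `x⁺ = max {x, 0}`
and `|t|^{p-2} t = 0` when `t = 0`. -/
theorem stmt_16 (p : ℝ) (hp : 1 < p) (a b c d : ℝ) :
    0 ≤ (|a - b| ^ (p - 2) * (a - b) - |c - d| ^ (p - 2) * (c - d)) *
        (max (a - c) 0 - max (b - d) 0) ∧
      (max (a - c) 0 ≠ max (b - d) 0 →
        0 < (|a - b| ^ (p - 2) * (a - b) - |c - d| ^ (p - 2) * (c - d)) *
          (max (a - c) 0 - max (b - d) 0)) := by
  have hF : StrictMono fun u : ℝ ↦ |u - (b - c)| ^ (p - 2) * (u - (b - c)) :=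
    (Real.strictMono_abs_rpow_sub_two_mul_self hp).comp fun _ _ h ↦ sub_lt_sub_right h _
  have hG : Monotone fun u : ℝ ↦ max u 0 := fun _ _ h ↦ max_le_max_right 0 h
  have key (hne : max (a - c) 0 ≠ max (b - d) 0) := hF.sub_mul_sub_pos_of_monotone hG hne
  simp only [sub_sub_sub_cancel_left, sub_sub_sub_cancel_right] at key
  refine ⟨?_, key⟩
  by_cases heq : max (a - c) 0 = max (b - d) 0
  · rw [heq, sub_self, mul_zero]
  · exact (key heq).le
end

section
/- Let N ≥ 1, let Ω ⊂ ℝ^N be a bounded measurable set, let s ∈ (0, 1), p > 1, γ ∈ (0, 1) and λ > 0. Let u, v : ℝ^N → ℝ be measurable functions with u = 0 and v = 0 almost everywhere on ℝ^N \ Ω and u > 0, v > 0 almost everywhere on Ω, and set w = (u − v)⁺. Assume that the function (x, y) ↦ (|u(x) − u(y)|^{p-2}(u(x) − u(y)) − |v(x) − v(y)|^{p-2}(v(x) − v(y))) (w(x) − w(y)) / |x − y|^{N+sp} is integrable on ℝ^N × ℝ^N, that w/u^γ and w/v^γ are integrable on Ω, and that the weak inequality tested against w holds: ∫∫_{ℝ^N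 × ℝ^N} (|v(x) − v(y)|^{p-2}(v(x) − v(y)) − |u(x) − u(y)|^{p-2}(u(x) − u(y))) (w(x) − w(y)) / |x − y|^{N+sp} dx dy ≥ λ ∫_Ω w (1/v^γ − 1/u^γ) dx. Then u ≤ v almost everywhere in ℝ^N. -/
/-!
Testing the difference of the two equations against `w = (u - v)⁺` makes both sides have a sign:
the nonlocal term is `≤ 0` because `t ↦ |t|^(p-2) t` is monotone, and the singular term is `≥ 0`
because `t ↦ t^(-γ)` is decreasing. Hence the singular integral vanishes, so its integrand
`w (v^(-γ) - u^(-γ))`, which is positive wherever `u > v`, vanishes a.e. on `Ω`.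
-/

open MeasureTheory Set

lemma monotone_abs_rpow_sub_two_mul_self {p : ℝ} (hp : 1 ≤ p) :
    Monotone fun t : ℝ => |t| ^ (p - 2) * t := by
  refine monotone_of_odd_of_monotoneOn_nonneg (fun t => by simp only [abs_neg, mul_neg]) ?_
  intro a (ha : 0 ≤ a) b (hb : 0 ≤ b) hab
  rcases ha.eq_or_lt with rfl | ha
  · simpa using mul_nonneg (Real.rpow_nonneg (abs_nonneg b) _) hb
  have hpow : ∀ t : ℝ, 0 < t → |t| ^ (p - 2) * t = t ^ (p - 2 + 1) := fun t ht => by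
    rw [abs_of_pos ht, Real.rpow_add_one ht.ne']
  simp only [hpow a ha, hpow b (ha.trans_le hab)]
  exact Real.rpow_le_rpow ha.le hab (by linarith)

lemma Monotone.sub_mul_max_sub_sub_max_sub_nonpos {φ : ℝ → ℝ} (hφ : Monotone φ)
    (a₁ a₂ b₁ b₂ : ℝ) :
    (φ (b₁ - b₂) - φ (a₁ - a₂)) * (max (a₁ - b₁) 0 - max (a₂ - b₂) 0) ≤ 0 := by
  rcases le_total (a₁ - b₁) (a₂ - b₂) with h | h
  · exact mul_nonpos_of_nonneg_of_nonpos (sub_nonneg.2 (hφ (by linarith)))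
      (sub_nonpos.2 (max_le_max h le_rfl))
  · exact mul_nonpos_of_nonpos_of_nonneg (sub_nonpos.2 (hφ (by linarith)))
      (sub_nonneg.2 (max_le_max h le_rfl))

lemma AntitoneOn.max_sub_mul_sub_nonneg {f : ℝ → ℝ} {s : Set ℝ} (hf : AntitoneOn f s)
    {a b : ℝ} (ha : a ∈ s) (hb : b ∈ s) : 0 ≤ max (a - b) 0 * (f b - f a) := by
  rcases le_or_gt a b with h | h
  · simp [max_eq_right (sub_nonpos.2 h)]
  · exact mul_nonneg (le_max_right _ _) (sub_nonneg.2 (hf hb ha h.le))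

lemma StrictAntiOn.le_of_max_sub_mul_sub_eq_zero {f : ℝ → ℝ} {s : Set ℝ} (hf : StrictAntiOn f s)
    {a b : ℝ} (ha : a ∈ s) (hb : b ∈ s) (h : max (a - b) 0 * (f b - f a) = 0) : a ≤ b := by
  by_contra! hba
  exact (mul_pos (lt_max_of_lt_left (sub_pos.2 hba)) (sub_pos.2 (hf hb ha hba))).ne' h

lemma strictAntiOn_one_div_rpow {γ : ℝ} (hγ : 0 < γ) :
    StrictAntiOn (fun t : ℝ => 1 / t ^ γ) (Ioi 0) :=
  fun _ ha _ _ hab =>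
    one_div_lt_one_div_of_lt (Real.rpow_pos_of_pos ha γ) (Real.rpow_lt_rpow (le_of_lt ha) hab hγ)

lemma ae_eq_zero_of_nonneg_of_integral_nonpos {α : Type*} [MeasurableSpace α] {μ : Measure α}
    {f : α → ℝ} (hf0 : 0 ≤ᵐ[μ] f) (hf : Integrable f μ) (hI : ∫ x, f x ∂μ ≤ 0) : f =ᵐ[μ] 0 :=
  (integral_eq_zero_iff_of_nonneg_ae hf0 hf).1 (le_antisymm hI (integral_nonneg_of_ae hf0))

theorem stmt_17_general (N : ℕ) (Ω : Set (EuclideanSpace ℝ (Fin N)))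
    (hΩm : MeasurableSet Ω)
    (s p γ lam : ℝ) (hp : 1 < p)
    (hγ : 0 < γ) (hlam : 0 < lam)
    (u v : EuclideanSpace ℝ (Fin N) → ℝ)
    (hu0 : ∀ᵐ x ∂volume, x ∉ Ω → u x = 0) (hv0 : ∀ᵐ x ∂volume, x ∉ Ω → v x = 0)
    (hupos : ∀ᵐ x ∂volume, x ∈ Ω → 0 < u x) (hvpos : ∀ᵐ x ∂volume, x ∈ Ω → 0 < v x)
    (w : EuclideanSpace ℝ (Fin N) → ℝ) (hw : w = fun x => max (u x - v x) 0)
    (hwu : IntegrableOn (fun x => w x / u x ^ γ) Ω volume)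
    (hwv : IntegrableOn (fun x => w x / v x ^ γ) Ω volume)
    (hineq : lam * ∫ x in Ω, w x * (1 / v x ^ γ - 1 / u x ^ γ) ∂volume ≤
      ∫ z : EuclideanSpace ℝ (Fin N) × EuclideanSpace ℝ (Fin N),
        (|v z.1 - v z.2| ^ (p - 2) * (v z.1 - v z.2) -
            |u z.1 - u z.2| ^ (p - 2) * (u z.1 - u z.2)) * (w z.1 - w z.2) /
          ‖z.1 - z.2‖ ^ ((N : ℝ) + s * p) ∂volume) :
    ∀ᵐ x ∂volume, u x ≤ v x := by
  have hwx : ∀ x, w x = max (u x - v x) 0 := fun x => by rw [hw]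
  have hsingular_nonpos : ∫ x in Ω, w x * (1 / v x ^ γ - 1 / u x ^ γ) ≤ 0 := by
    refine nonpos_of_mul_nonpos_right (hineq.trans (integral_nonpos fun z => ?_)) hlam
    refine div_nonpos_of_nonpos_of_nonneg ?_ (Real.rpow_nonneg (norm_nonneg _) _)
    simpa only [hwx] using (monotone_abs_rpow_sub_two_mul_self hp.le)
      |>.sub_mul_max_sub_sub_max_sub_nonpos (u z.1) (u z.2) (v z.1) (v z.2)
  have hanti := strictAntiOn_one_div_rpow hγ
  have hsingular_nonneg : ∀ᵐ x ∂volume.restrict Ω, 0 ≤ w x * (1 / v x ^ γ - 1 / u x ^ γ) := by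
    refine (ae_restrict_iff' hΩm).2 ?_
    filter_upwards [hupos, hvpos] with x hux hvx hx
    simpa only [hwx] using hanti.antitoneOn.max_sub_mul_sub_nonneg (hux hx) (hvx hx)
  have hsingular_int : IntegrableOn (fun x => w x * (1 / v x ^ γ - 1 / u x ^ γ)) Ω := by
    refine (hwv.sub hwu).congr_fun (fun x _ => ?_) hΩm
    simp only [Pi.sub_apply]
    ring
  have hsingular_zero :=
    ae_eq_zero_of_nonneg_of_integral_nonpos hsingular_nonneg hsingular_int hsingular_nonpos
  rw [Filter.EventuallyEq, ae_restrict_iff' hΩm] at hsingular_zero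
  filter_upwards [hu0, hv0, hupos, hvpos, hsingular_zero] with x hu0x hv0x hux hvx hzero
  by_cases hx : x ∈ Ω
  · refine hanti.le_of_max_sub_mul_sub_eq_zero (hux hx) (hvx hx) ?_
    simpa only [hwx, Pi.zero_apply] using hzero hx
  · rw [hu0x hx, hv0x hx]

/-- Lemma 2.3 (weak comparison principle) for the singular fractional
`p`-Laplacian: if `u, v` vanish a.e. outside the bounded set `Ω`, are a.e.
positive on `Ω`, the kernel difference tested against `w = (u − v)⁺` is
integrable, `w/u^γ` and `w/v^γ` are integrable on `Ω`, and the weak inequality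
`(−Δ_p)^s v − λ/v^γ ≥ (−Δ_p)^s u − λ/u^γ` tested against `w` holds, then
`u ≤ v` a.e. in `ℝ^N`. -/
theorem stmt_17 (N : ℕ) (hN : 1 ≤ N) (Ω : Set (EuclideanSpace ℝ (Fin N)))
    (hΩm : MeasurableSet Ω) (hΩb : Bornology.IsBounded Ω)
    (s p γ lam : ℝ) (hs : 0 < s) (hs1 : s < 1) (hp : 1 < p)
    (hγ : 0 < γ) (hγ1 : γ < 1) (hlam : 0 < lam)
    (u v : EuclideanSpace ℝ (Fin N) → ℝ) (hu : Measurable u) (hv : Measurable v)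
    (hu0 : ∀ᵐ x ∂volume, x ∉ Ω → u x = 0) (hv0 : ∀ᵐ x ∂volume, x ∉ Ω → v x = 0)
    (hupos : ∀ᵐ x ∂volume, x ∈ Ω → 0 < u x) (hvpos : ∀ᵐ x ∂volume, x ∈ Ω → 0 < v x)
    (w : EuclideanSpace ℝ (Fin N) → ℝ) (hw : w = fun x => max (u x - v x) 0)
    (hker : Integrable (fun z : EuclideanSpace ℝ (Fin N) × EuclideanSpace ℝ (Fin N) =>
      (|u z.1 - u z.2| ^ (p - 2) * (u z.1 - u z.2) -
          |v z.1 - v z.2| ^ (p - 2) * (v z.1 - v z.2)) * (w z.1 - w z.2) /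
        ‖z.1 - z.2‖ ^ ((N : ℝ) + s * p)) volume)
    (hwu : IntegrableOn (fun x => w x / u x ^ γ) Ω volume)
    (hwv : IntegrableOn (fun x => w x / v x ^ γ) Ω volume)
    (hineq : lam * ∫ x in Ω, w x * (1 / v x ^ γ - 1 / u x ^ γ) ∂volume ≤
      ∫ z : EuclideanSpace ℝ (Fin N) × EuclideanSpace ℝ (Fin N),
        (|v z.1 - v z.2| ^ (p - 2) * (v z.1 - v z.2) -
            |u z.1 - u z.2| ^ (p - 2) * (u z.1 - u z.2)) * (w z.1 - w z.2) /
          ‖z.1 - z.2‖ ^ ((N : ℝ) + s * p) ∂volume) :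
    ∀ᵐ x ∂volume, u x ≤ v x :=
  stmt_17_general N Ω hΩm s p γ lam hp hγ hlam u v hu0 hv0 hupos hvpos w hw hwu hwv hineq
end
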